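/- For a non-negative integer n, ∑_{k=1}^n ∑_{j=0}^{k-1} H_{n-j}^{(2)}/(k-j) = (n+1) H_n H_n^{(2)} − ((2n+1)/2) H_n^{(2)} + H_n − (1/2) H_n^2. -/

import Mathlib

open Finset

noncomputable def Hh (n : ℕ) : ℝ := ∑ k ∈ Icc 1 n, (1 : ℝ) / (k : ℝ)
noncomputable def Hh2 (n : ℕ) : ℝ := ∑ k ∈ Icc 1 n, (1 : ℝ) / (k : ℝ) ^ 2

lemma Hh_succ (n : ℕ) : Hh (n + 1) = Hh n + 1 / ((n : ℝ) + 1) := by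
  unfold Hh
  rw [Finset.sum_Icc_succ_top (by omega)]
  push_cast; ring

lemma Hh2_succ (n : ℕ) : Hh2 (n + 1) = Hh2 n + 1 / ((n : ℝ) + 1) ^ 2 := by
  unfold Hh2
  rw [Finset.sum_Icc_succ_top (by omega)]
  push_cast; ring

lemma swapA (f : ℕ → ℝ) (n : ℕ) :
    ∑ k ∈ Icc 1 n, ∑ j ∈ range k, f j / ((k - j : ℕ) : ℝ)
      = ∑ j ∈ range n, f j * Hh (n - j) := by
  induction n with
  | zero => simp
  | succ n ih =>
    rw [Finset.sum_Icc_succ_top (by omega), ih, Finset.sum_range_succ]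
    have key : ∀ j ∈ range n, f j * Hh (n + 1 - j)
        = f j * Hh (n - j) + f j / ((n + 1 - j : ℕ) : ℝ) := by
      intro j hj
      rw [mem_range] at hj
      have h1 : n + 1 - j = (n - j) + 1 := by omega
      rw [h1, Hh_succ]
      have h2 : ((n - j : ℕ) : ℝ) + 1 = ((n - j + 1 : ℕ) : ℝ) := by push_cast; ring
      rw [h2, ← h1]
      ring
    rw [Finset.sum_range_succ, Finset.sum_congr rfl key, Finset.sum_add_distrib]
    have hn : n + 1 - n = 1 := by omega
    rw [hn]
    have : Hh 1 = 1 := by unfold Hh; simp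
    rw [this]
    push_cast
    ring

lemma sumB (n : ℕ) :
    ∑ m ∈ Icc 1 n, Hh m * Hh2 m
      = ((n : ℝ) + 1) * Hh n * Hh2 n - ((2 * (n : ℝ) + 1) / 2) * Hh2 n + Hh n
        - (1 / 2) * (Hh n) ^ 2 := by
  induction n with
  | zero => simp [Hh, Hh2]
  | succ n ih =>
    rw [Finset.sum_Icc_succ_top (by omega), ih, Hh_succ, Hh2_succ]
    have hn : ((n : ℝ) + 1) ≠ 0 := by positivity
    push_cast
    field_simp
    ring

theorem double_sum_harmonic2_over_gap (n : ℕ) :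
    ∑ k ∈ Finset.Icc 1 n, ∑ j ∈ Finset.range k,
        (∑ i ∈ Finset.Icc 1 (n - j), (1 : ℝ) / (i : ℝ) ^ 2) / ((k - j : ℕ) : ℝ) =
      ((n : ℝ) + 1) * (∑ k ∈ Finset.Icc 1 n, (1 : ℝ) / (k : ℝ)) *
          (∑ k ∈ Finset.Icc 1 n, (1 : ℝ) / (k : ℝ) ^ 2) -
        ((2 * (n : ℝ) + 1) / 2) * (∑ k ∈ Finset.Icc 1 n, (1 : ℝ) / (k : ℝ) ^ 2) +
        (∑ k ∈ Finset.Icc 1 n, (1 : ℝ) / (k : ℝ)) -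
        (1 / 2) * (∑ k ∈ Finset.Icc 1 n, (1 : ℝ) / (k : ℝ)) ^ 2 := by
  have h1 : (∑ k ∈ Finset.Icc 1 n, ∑ j ∈ Finset.range k,
      (∑ i ∈ Finset.Icc 1 (n - j), (1 : ℝ) / (i : ℝ) ^ 2) / ((k - j : ℕ) : ℝ))
      = ∑ j ∈ range n, Hh2 (n - j) * Hh (n - j) := swapA (fun j => Hh2 (n - j)) n
  have h2 : ∑ j ∈ range n, Hh2 (n - j) * Hh (n - j) = ∑ m ∈ Icc 1 n, Hh m * Hh2 m := by
    rw [← Finset.Ico_add_one_right_eq_Icc, Finset.sum_Ico_eq_sum_range]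
    have hr : n + 1 - 1 = n := by omega
    rw [hr, ← Finset.sum_range_reflect (fun i => Hh (1 + i) * Hh2 (1 + i)) n]
    apply Finset.sum_congr rfl
    intro j hj
    rw [mem_range] at hj
    have h1 : 1 + (n - 1 - j) = n - j := by omega
    rw [h1]
    ring
  rw [h1, h2, sumB n]
  rfl
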